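/- arXiv:1112.1769 — 2 statements merged into one kernel-verified Lean document; each statement's English description precedes it below -/
import Mathlib

section
/- Consider the one-particle heat-transfer kernel: given kinetic energy T, draw ξ ~ Gamma(3/2, β) independently and then draw the new energy T₁ from the conditional density of ζ₁ given ζ₁+ζ₂ = T+ξ for i.i.d. ζ₁, ζ₂ ~ Gamma(3/2, β). Then the Gamma(3/2, β) distribution (i.e., density c√x e^{-βx}) is invariant for this kernel. -/
/-!
The heat kernel is the Kac kernel `s ↦ p(· | s)` evaluated at `s = T + ξ` with
`ξ ~ Gamma(3/2, β)`. Mixing it over `T ~ Gamma(3/2, β)` therefore mixes `p(· | s)` over the law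
of the sum of two independent `Gamma(3/2, β)` variables, which is `Gamma(3, β)`. Writing `Γ_a`
for the `Gamma(a, β)` density, `p(x | s)` is the conditional density of `ζ₁` given
`ζ₁ + ζ₂ = s`: `Γ_3(s) p(x | s) = Γ_{3/2}(x) Γ_{3/2}(s - x)`, so mixing it over
`s ~ Gamma(3, β)` returns the law of `ζ₁`. The convolution identity `Γ_a ⋆ Γ_b = Γ_{a+b}`
comes from the substitution `x = s u`, which splits `s Γ_a(s u) Γ_b(s - s u)` into `Γ_{a+b}(s)`
times the `Beta(a, b)` density of `u`.
-/

open MeasureTheory ProbabilityTheory Real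

/-- The Kac conditional density `p(x | s)` of `ζ₁` given `ζ₁ + ζ₂ = s` for i.i.d.
Gamma(a, ·) variables. -/
noncomputable def kacCondDensity (a x s : ℝ) : ℝ :=
  (Real.Gamma (2 * a) / (Real.Gamma a) ^ 2) * x ^ (a - 1) * (s - x) ^ (a - 1) / s ^ (2 * a - 1)

/-- The distribution on `(0, s)` with density `p(· | s)`. -/
noncomputable def kacCondMeasure (a s : ℝ) : Measure ℝ :=
  (volume.restrict (Set.Ioo 0 s)).withDensity fun x => ENNReal.ofReal (kacCondDensity a x s)

/-- The one-particle heat-transfer kernel at inverse temperature `β`: given kinetic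
energy `T`, draw `ξ ~ Gamma(3/2, β)` (the energy of an outside molecule, i.e. χ²
with 3 degrees of freedom), then draw the new energy `T₁` from the Kac conditional
density `p(· | T + ξ)` on `[0, T + ξ]`. -/
noncomputable def heatKernel (β T : ℝ) : Measure ℝ :=
  (gammaMeasure (3 / 2) β).bind fun ξ => kacCondMeasure (3 / 2) (T + ξ)

open scoped ENNReal

namespace MeasureTheory.Measure

variable {α β : Type*} [MeasurableSpace α] [MeasurableSpace β]

lemma measurable_withDensity_uncurry (ν : Measure β) [SFinite ν] {k : α → β → ℝ≥0∞}
    (hk : Measurable (Function.uncurry k)) : Measurable fun a => ν.withDensity (k a) := by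
  convert (Kernel.withDensity (Kernel.const α ν) k).measurable using 2 with a
  rw [Kernel.withDensity_apply _ hk, Kernel.const_apply]

lemma bind_withDensity (μ : Measure α) (ν : Measure β) [SFinite μ] [SFinite ν]
    {k : α → β → ℝ≥0∞} (hk : Measurable (Function.uncurry k)) :
    μ.bind (fun a => ν.withDensity (k a)) = ν.withDensity fun b => ∫⁻ a, k a b ∂μ := by
  ext A hA
  rw [bind_apply hA (measurable_withDensity_uncurry ν hk).aemeasurable, withDensity_apply _ hA]
  simp_rw [withDensity_apply _ hA]
  exact lintegral_lintegral_swap hk.aemeasurable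

variable {M : Type*} [AddMonoid M] [MeasurableSpace M] [MeasurableAdd₂ M]

lemma conv_bind (μ ν : Measure M) [SFinite ν] {κ : M → Measure α} (hκ : Measurable κ) :
    (μ ∗ ν).bind κ = μ.bind fun x => ν.bind fun y => κ (x + y) := by
  have hinner : Measurable fun x => ν.bind fun y => κ (x + y) := by
    refine measurable_of_measurable_coe _ fun A hA => ?_
    have hκ_add : Measurable fun p : M × M => κ (p.1 + p.2) A :=
      (measurable_coe hA).comp (hκ.comp measurable_add)
    convert hκ_add.lintegral_prod_right' (ν := ν) using 2 with x
    exact bind_apply hA (hκ.comp (measurable_const_add x)).aemeasurable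
  ext A hA
  rw [bind_apply hA hκ.aemeasurable, bind_apply hA hinner.aemeasurable,
    lintegral_conv (f := fun x => κ x A) ((measurable_coe hA).comp hκ)]
  refine lintegral_congr fun x => ?_
  exact (bind_apply hA (hκ.comp (measurable_const_add x)).aemeasurable).symm

end MeasureTheory.Measure

lemma Real.ofReal_abs_mul_lintegral_comp_mul_left (F : ℝ → ℝ≥0∞) {s : ℝ}
    (hs : s ≠ 0) :
    ENNReal.ofReal |s| * ∫⁻ u, F (s * u) = ∫⁻ x, F x := by
  conv_rhs => rw [← Real.smul_map_volume_mul_left hs]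
  rw [lintegral_smul_measure, smul_eq_mul]
  exact congrArg _
    (lintegral_map_equiv F (Homeomorph.mulLeft₀ s hs).toMeasurableEquiv).symm

namespace ProbabilityTheory

@[fun_prop]
lemma measurable_gammaPDF (a r : ℝ) : Measurable (gammaPDF a r) :=
  (measurable_gammaPDFReal a r).ennreal_ofReal

section GammaBeta

variable {a b r : ℝ}

lemma gammaPDF_mul_gammaPDF_eq_gammaPDF_mul_betaPDF (ha : 0 < a) (hb : 0 < b) (hr : 0 < r)
    {s u : ℝ} (hs : 0 < s) (hu₀ : u ≠ 0) (hu₁ : u ≠ 1) :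
    ENNReal.ofReal s * (gammaPDF a r (s * u) * gammaPDF b r (s - s * u))
      = gammaPDF (a + b) r s * betaPDF a b u := by
  rcases lt_or_gt_of_ne hu₀ with hu | hu
  · rw [gammaPDF_of_neg (mul_neg_of_pos_of_neg hs hu), betaPDF_eq_zero_of_nonpos hu.le]
    simp
  rcases lt_or_gt_of_ne hu₁ with hu' | hu'
  swap
  · rw [gammaPDF_of_neg (by nlinarith : s - s * u < 0), betaPDF_eq_zero_of_one_le hu'.le]
    simp
  have hΓa := Real.Gamma_pos_of_pos ha
  have hΓb := Real.Gamma_pos_of_pos hb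
  have hΓab := Real.Gamma_pos_of_pos (add_pos ha hb)
  have h1u : 0 < 1 - u := sub_pos.mpr hu'
  rw [gammaPDF_of_nonneg (by positivity), gammaPDF_of_nonneg (by nlinarith),
    gammaPDF_of_nonneg hs.le, betaPDF_of_pos_lt_one hu hu', ← ENNReal.ofReal_mul (by positivity),
    ← ENNReal.ofReal_mul hs.le, ← ENNReal.ofReal_mul (by positivity)]
  congr 1
  have hexp : exp (-(r * (s * u))) * exp (-(r * (s - s * u))) = exp (-(r * s)) := by
    rw [← exp_add]; ring_nf
  have hspow : s ^ (a + b - 1) = s * s ^ (a - 1) * s ^ (b - 1) := by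
    rw [← rpow_one_add' hs.le (by linarith), ← rpow_add hs]; ring_nf
  rw [show s - s * u = s * (1 - u) by ring, mul_rpow hs.le hu.le, mul_rpow hs.le h1u.le,
    rpow_add hr, hspow, beta, ← hexp]
  field_simp

lemma lconvolution_gammaPDF_of_pos (ha : 0 < a) (hb : 0 < b) (hr : 0 < r) {s : ℝ}
    (hs : 0 < s) : (gammaPDF a r ⋆ₗ gammaPDF b r) s = gammaPDF (a + b) r s := by
  rw [lconvolution_def, ← Real.ofReal_abs_mul_lintegral_comp_mul_left _ hs.ne', abs_of_pos hs,
    ← lintegral_const_mul' _ _ ENNReal.ofReal_ne_top]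
  simp_rw [neg_add_eq_sub]
  calc ∫⁻ u, ENNReal.ofReal s * (gammaPDF a r (s * u) * gammaPDF b r (s - s * u))
      = ∫⁻ u, gammaPDF (a + b) r s * betaPDF a b u := by
        refine lintegral_congr_ae ?_
        filter_upwards [volume.ae_ne 0, volume.ae_ne 1] with u hu₀ hu₁
        exact gammaPDF_mul_gammaPDF_eq_gammaPDF_mul_betaPDF ha hb hr hs hu₀ hu₁
    _ = gammaPDF (a + b) r s := by
        rw [lintegral_const_mul (f := betaPDF a b) _
          (measurable_betaPDFReal a b).ennreal_ofReal, lintegral_betaPDF_eq_one ha hb, mul_one]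

lemma lconvolution_gammaPDF_ae_eq (ha : 0 < a) (hb : 0 < b) (hr : 0 < r) :
    gammaPDF a r ⋆ₗ gammaPDF b r =ᵐ[volume] gammaPDF (a + b) r := by
  filter_upwards [volume.ae_ne 0] with s hs
  rcases hs.lt_or_gt with hs | hs
  · rw [gammaPDF_of_neg hs, lconvolution_def, lintegral_eq_zero_iff' (by fun_prop)]
    refine ae_of_all _ fun y => ?_
    rcases lt_or_ge y 0 with hy | hy
    · simp [gammaPDF_of_neg hy]
    · simp [gammaPDF_of_neg (by linarith : -y + s < 0)]
  · exact lconvolution_gammaPDF_of_pos ha hb hr hs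

theorem gammaMeasure_conv_gammaMeasure (ha : 0 < a) (hb : 0 < b) (hr : 0 < r) :
    gammaMeasure a r ∗ gammaMeasure b r = gammaMeasure (a + b) r := by
  rw [gammaMeasure, gammaMeasure, gammaMeasure,
    conv_withDensity_eq_lconvolution (measurable_gammaPDF a r) (measurable_gammaPDF b r)]
  exact withDensity_congr_ae (lconvolution_gammaPDF_ae_eq ha hb hr)

end GammaBeta

end ProbabilityTheory

section Kac

noncomputable def kacDensity (a s x : ℝ) : ℝ≥0∞ :=
  (Set.Ioo 0 s).indicator (fun x => ENNReal.ofReal (kacCondDensity a x s)) x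

lemma kacCondMeasure_eq_withDensity (a : ℝ) :
    kacCondMeasure a = fun s => volume.withDensity (kacDensity a s) :=
  funext fun _ => (withDensity_indicator measurableSet_Ioo _).symm

lemma measurable_kacDensity (a : ℝ) : Measurable (Function.uncurry (kacDensity a)) := by
  have hset : MeasurableSet {p : ℝ × ℝ | p.2 ∈ Set.Ioo 0 p.1} :=
    (measurableSet_lt measurable_const measurable_snd).inter
      (measurableSet_lt measurable_snd measurable_fst)
  have hdens : Measurable fun p : ℝ × ℝ => ENNReal.ofReal (kacCondDensity a p.2 p.1) := by
    unfold kacCondDensity; fun_prop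
  exact hdens.indicator hset

lemma measurable_kacCondMeasure (a : ℝ) : Measurable (kacCondMeasure a) := by
  rw [kacCondMeasure_eq_withDensity]
  exact Measure.measurable_withDensity_uncurry volume (measurable_kacDensity a)

variable {a r : ℝ}

lemma kacDensity_of_notMem {s x : ℝ} (hx : x ∉ Set.Ioo 0 s) : kacDensity a s x = 0 :=
  Set.indicator_of_notMem hx _

lemma gammaPDF_mul_kacDensity (ha : 0 < a) (hr : 0 < r) {s x : ℝ} (hx : 0 < x) (hxs : x ≠ s) :
    gammaPDF (2 * a) r s * kacDensity a s x = gammaPDF a r x * gammaPDF a r (s - x) := by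
  rcases hxs.lt_or_gt with hxs | hsx
  swap
  · rw [kacDensity_of_notMem fun h => h.2.not_gt hsx, gammaPDF_of_neg (sub_neg.mpr hsx)]
    simp
  have hs : 0 < s := hx.trans hxs
  have hΓa := Real.Gamma_pos_of_pos ha
  have hΓ2a := Real.Gamma_pos_of_pos (mul_pos two_pos ha)
  rw [kacDensity, Set.indicator_of_mem (show x ∈ Set.Ioo 0 s from ⟨hx, hxs⟩),
    gammaPDF_of_nonneg hs.le, gammaPDF_of_nonneg hx.le, gammaPDF_of_nonneg (sub_nonneg.mpr hxs.le),
    ← ENNReal.ofReal_mul (by positivity), ← ENNReal.ofReal_mul (by positivity)]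
  congr 1
  have hexp : exp (-(r * x)) * exp (-(r * (s - x))) = exp (-(r * s)) := by
    rw [← exp_add]; ring_nf
  have hsx : 0 < s - x := sub_pos.mpr hxs
  unfold kacCondDensity
  rw [two_mul a, rpow_add hr, ← hexp]
  field_simp

lemma lintegral_gammaPDF_mul_kacDensity (ha : 0 < a) (hr : 0 < r) {x : ℝ} (hx : 0 < x) :
    ∫⁻ s, gammaPDF (2 * a) r s * kacDensity a s x = gammaPDF a r x := by
  calc ∫⁻ s, gammaPDF (2 * a) r s * kacDensity a s x
      = ∫⁻ s, gammaPDF a r x * gammaPDF a r (s - x) := by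
        refine lintegral_congr_ae ?_
        filter_upwards [volume.ae_ne x] with s hs
        exact gammaPDF_mul_kacDensity ha hr hx hs.symm
    _ = gammaPDF a r x := by
        rw [lintegral_const_mul _ (by fun_prop), lintegral_sub_right_eq_self (gammaPDF a r) x,
          lintegral_gammaPDF_eq_one ha hr, mul_one]

theorem bind_gammaMeasure_kacCondMeasure (ha : 0 < a) (hr : 0 < r) :
    (gammaMeasure (2 * a) r).bind (kacCondMeasure a) = gammaMeasure a r := by
  have := isProbabilityMeasure_gammaMeasure (mul_pos two_pos ha) hr
  rw [kacCondMeasure_eq_withDensity, Measure.bind_withDensity _ _ (measurable_kacDensity a),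
    gammaMeasure]
  refine withDensity_congr_ae ?_
  filter_upwards [volume.ae_ne 0] with x hx
  rw [lintegral_withDensity_eq_lintegral_mul _ (measurable_gammaPDF _ _)
    (measurable_kacDensity a).of_uncurry_right]
  rcases hx.lt_or_gt with hx | hx
  · simp [kacDensity_of_notMem fun h : x ∈ Set.Ioo 0 _ => hx.not_gt h.1, gammaPDF_of_neg hx]
  · exact lintegral_gammaPDF_mul_kacDensity ha hr hx

end Kac

/-- the `Gamma(3/2, β)` distribution (density `c √x e^{-βx}`, the χ²
distribution with 3 degrees of freedom) is invariant for the heat-transfer kernel. -/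
theorem gamma_invariant_heatKernel (β : ℝ) (hβ : 0 < β) :
    (gammaMeasure (3 / 2) β).bind (heatKernel β) = gammaMeasure (3 / 2) β := by
  have h32 : (0 : ℝ) < 3 / 2 := by norm_num
  have := isProbabilityMeasure_gammaMeasure h32 hβ
  unfold heatKernel
  rw [← Measure.conv_bind _ _ (measurable_kacCondMeasure _),
    gammaMeasure_conv_gammaMeasure h32 h32 hβ, ← two_mul,
    bind_gammaMeasure_kacCondMeasure h32 hβ]
end

section
/- In the abstract mean-field combinatorics of the appendix: the number C_{n,ess}^{(N)} of essential connected 1-sequences of length n among N particles satisfies (N−1)^{−n} C_{n,ess}^{(N)} = ∏_{k=1}^{n} k(N−k)/(N−1), hence (N−1)^{−n} C_{n,ess}^{(N)} ≤ n! for all N > n, and (N−1)^{−n} C_{n,ess}^{(N)} → n! as N → ∞. -/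
/-!
Removing the first pair of an essential connected sequence of length `n + 1` leaves one of
length `n`, whose pairs cover exactly `n + 1` particles (one new particle per pair, starting
from particle `1`). Conversely, such a tail extends precisely by a pair with one particle among
those `n + 1` and one among the other `N - n - 1`. Hence `C_{n+1} = C_n (n + 1) (N - n - 1)`,
which gives the product formula; each factor `k (N - k) / (N - 1)` lies in `[0, k]` and tends
to `k`.
-/

open Finset Filter

/-- The union `V_i` of the pairs occurring later than position `i` in the sequence `θ`. -/
def laterUnion {N n : ℕ} (theta : Fin n → Finset (Fin N)) (i : Fin n) : Finset (Fin N) :=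
  Finset.univ.biUnion fun k => if i < k then theta k else ∅

/-- An essential connected `1`-sequence of length `n` among `N` particles: an ordered
sequence of unordered pairs (2-element subsets) `θ 0, …, θ (n-1)` of `{1,…,N}` such that
particle `1` (here the vertex `⟨0, _⟩`) belongs to the last pair, every pair except the
last intersects the union of the later pairs (connectedness), and no pair is contained
in the union of the later pairs (essentiality). -/
def IsEssConnSeq {N n : ℕ} (theta : Fin n → Finset (Fin N)) : Prop :=
  (∀ i, (theta i).card = 2) ∧
  (∀ i : Fin n, (i : ℕ) < n - 1 → (theta i ∩ laterUnion theta i).Nonempty) ∧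
  (∀ i, ¬ theta i ⊆ laterUnion theta i) ∧
  (∀ hn : 0 < n, ∀ hN : 0 < N, (⟨0, hN⟩ : Fin N) ∈ theta ⟨n - 1, by omega⟩)

/-- `C_{n,ess}^{(N)}`: the number of essential connected `1`-sequences of length `n`
among `N` particles. -/
noncomputable def essConnCount (N n : ℕ) : ℕ :=
  Nat.card {theta : Fin n → Finset (Fin N) // IsEssConnSeq theta}


section CrossingPairs

variable {α : Type*} [DecidableEq α]

theorem card_union_eq_add_one_of_crossing {p S : Finset α} (hp : #p = 2)
    (hmeet : (p ∩ S).Nonempty) (hout : ¬ p ⊆ S) : #(p ∪ S) = #S + 1 := by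
  have hinter : #(p ∩ S) = 1 := by
    have hlt : #(p ∩ S) < #p :=
      card_lt_card ⟨inter_subset_left, fun h => hout (h.trans inter_subset_right)⟩
    have := hmeet.card_pos
    omega
  have := card_union_add_card_inter p S
  omega

variable [Fintype α]

def crossingPairs (S : Finset α) : Finset (Finset α) :=
  {p | #p = 2 ∧ (p ∩ S).Nonempty ∧ ¬ p ⊆ S}

theorem card_crossingPairs (S : Finset α) : #(crossingPairs S) = #S * #Sᶜ := by
  rw [← card_product]
  symm
  refine card_nbij (fun q => {q.1, q.2}) ?_ ?_ ?_
  · rintro ⟨a, b⟩ hab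
    simp only [coe_product, Set.mem_prod, mem_coe, mem_compl] at hab
    have hne : a ≠ b := by rintro rfl; exact hab.2 hab.1
    simp only [crossingPairs, coe_filter, mem_univ, true_and, Set.mem_ofPred_eq]
    exact ⟨card_pair hne, ⟨a, by simp [hab.1]⟩, fun h => hab.2 (h (by simp))⟩
  · rintro ⟨a, b⟩ hab ⟨c, d⟩ hcd h
    simp only [coe_product, Set.mem_prod, mem_coe, mem_compl] at hab hcd h
    have hc : c ∈ ({a, b} : Finset α) := h ▸ mem_insert_self c {d}
    have hd : d ∈ ({a, b} : Finset α) := h ▸ by simp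
    simp only [mem_insert, mem_singleton] at hc hd
    rcases hc with rfl | rfl <;> rcases hd with rfl | rfl <;> simp_all
  · intro p hp
    simp only [crossingPairs, coe_filter, mem_univ, true_and, Set.mem_ofPred_eq] at hp
    obtain ⟨hp2, ⟨a, ha⟩, hout⟩ := hp
    rw [mem_inter] at ha
    obtain ⟨b, hbp, hbS⟩ := not_subset.1 hout
    have hne : a ≠ b := by rintro rfl; exact hbS ha.2
    refine ⟨(a, b), by simp [ha.2, hbS], ?_⟩
    exact eq_of_subset_of_card_le (by simp [insert_subset_iff, ha.1, hbp]) (by simp [hp2, hne])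

end CrossingPairs

section Sequences

variable {N n : ℕ}

theorem mem_laterUnion {θ : Fin n → Finset (Fin N)} {i : Fin n} {a : Fin N} :
    a ∈ laterUnion θ i ↔ ∃ k, i < k ∧ a ∈ θ k := by
  simp only [laterUnion, mem_biUnion, mem_univ, true_and]
  refine exists_congr fun k => ?_
  split_ifs with h <;> simp [h]

theorem laterUnion_cons_zero (p : Finset (Fin N)) (θ : Fin n → Finset (Fin N)) :
    laterUnion (Fin.cons p θ : Fin (n + 1) → Finset (Fin N)) 0 = univ.biUnion θ := by
  ext a
  simp [mem_laterUnion, Fin.exists_fin_succ, Fin.succ_pos]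

theorem laterUnion_cons_succ (p : Finset (Fin N)) (θ : Fin n → Finset (Fin N)) (i : Fin n) :
    laterUnion (Fin.cons p θ : Fin (n + 1) → Finset (Fin N)) i.succ = laterUnion θ i := by
  ext a
  simp [mem_laterUnion, Fin.exists_fin_succ]

theorem essConnCount_zero : essConnCount N 0 = 1 := by
  simp [essConnCount, IsEssConnSeq]

variable [NeZero N]

/-- Particle `1` is included so that even the empty sequence has a vertex set for the next pair to
cross, which makes `isEssConnSeq_cons_iff` uniform in `n`. -/
def vertexSet (θ : Fin n → Finset (Fin N)) : Finset (Fin N) :=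
  insert 0 (univ.biUnion θ)

theorem vertexSet_cons (p : Finset (Fin N)) (θ : Fin n → Finset (Fin N)) :
    vertexSet (Fin.cons p θ : Fin (n + 1) → Finset (Fin N)) = p ∪ vertexSet θ := by
  ext a
  simp [vertexSet, Fin.exists_fin_succ]

theorem vertexSet_of_isEmpty (θ : Fin 0 → Finset (Fin N)) : vertexSet θ = {0} := by
  simp [vertexSet]

theorem IsEssConnSeq.vertexSet_eq {θ : Fin n → Finset (Fin N)} (h : IsEssConnSeq θ)
    (hn : 0 < n) : vertexSet θ = univ.biUnion θ :=
  insert_eq_of_mem (mem_biUnion.2 ⟨_, mem_univ _, h.2.2.2 hn (NeZero.pos N)⟩)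

theorem isEssConnSeq_cons_iff' {p : Finset (Fin N)} {θ : Fin n → Finset (Fin N)} :
    IsEssConnSeq (Fin.cons p θ : Fin (n + 1) → Finset (Fin N)) ↔
      IsEssConnSeq θ ∧ #p = 2 ∧ (0 < n → (p ∩ univ.biUnion θ).Nonempty) ∧
        ¬ p ⊆ univ.biUnion θ ∧ (n = 0 → 0 ∈ p) := by
  set θ' : Fin (n + 1) → Finset (Fin N) := Fin.cons p θ
  have hcard : (∀ i, #(θ' i) = 2) ↔ #p = 2 ∧ ∀ i, #(θ i) = 2 := by
    simp [θ', Fin.forall_fin_succ]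
  have hconn : (∀ i : Fin (n + 1), (i : ℕ) < n + 1 - 1 → (θ' i ∩ laterUnion θ' i).Nonempty) ↔
      (0 < n → (p ∩ univ.biUnion θ).Nonempty) ∧
        ∀ i : Fin n, (i : ℕ) < n - 1 → (θ i ∩ laterUnion θ i).Nonempty := by
    rw [Fin.forall_fin_succ]
    simp only [θ', Fin.cons_zero, Fin.cons_succ, laterUnion_cons_zero, laterUnion_cons_succ,
      Fin.val_zero, Fin.val_succ, Nat.add_sub_cancel]
    exact and_congr_right' (forall_congr' fun i => imp_congr_left Nat.lt_sub_iff_add_lt.symm)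
  have hess : (∀ i, ¬ θ' i ⊆ laterUnion θ' i) ↔
      ¬ p ⊆ univ.biUnion θ ∧ ∀ i, ¬ θ i ⊆ laterUnion θ i := by
    simp [θ', Fin.forall_fin_succ, laterUnion_cons_zero, laterUnion_cons_succ]
  have hroot : (∀ (hn : 0 < n + 1) (hN : 0 < N), (⟨0, hN⟩ : Fin N) ∈ θ' ⟨n + 1 - 1, by omega⟩) ↔
      (n = 0 → 0 ∈ p) ∧ ∀ (hn : 0 < n) (hN : 0 < N), (⟨0, hN⟩ : Fin N) ∈ θ ⟨n - 1, by omega⟩ := by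
    rcases n with _ | m
    · simp [θ', NeZero.pos N]
    · have hlast : θ' ⟨m + 1, by omega⟩ = θ ⟨m, by omega⟩ :=
        Fin.cons_succ (α := fun _ => Finset (Fin N)) p θ ⟨m, by omega⟩
      simp [hlast]
  rw [IsEssConnSeq, hcard, hconn, hess, hroot, IsEssConnSeq]
  tauto

theorem isEssConnSeq_cons_iff {p : Finset (Fin N)} {θ : Fin n → Finset (Fin N)} :
    IsEssConnSeq (Fin.cons p θ : Fin (n + 1) → Finset (Fin N)) ↔
      IsEssConnSeq θ ∧ p ∈ crossingPairs (vertexSet θ) := by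
  rw [isEssConnSeq_cons_iff', crossingPairs, mem_filter_univ]
  rcases n.eq_zero_or_pos with rfl | hn
  · by_cases h0 : 0 ∈ p <;>
      simp [h0, vertexSet_of_isEmpty, inter_singleton_of_mem, inter_singleton_of_notMem]
    rintro - hp - rfl
    simp at hp
  · refine and_congr_right fun hθ => ?_
    simp [hθ.vertexSet_eq hn, hn, hn.ne']

theorem IsEssConnSeq.card_vertexSet {θ : Fin n → Finset (Fin N)} (h : IsEssConnSeq θ) :
    #(vertexSet θ) = n + 1 := by
  induction n with
  | zero => simp [vertexSet_of_isEmpty]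
  | succ m ih =>
    rw [← Fin.cons_self_tail θ] at h ⊢
    obtain ⟨htail, hp⟩ := isEssConnSeq_cons_iff.1 h
    simp only [crossingPairs, mem_filter_univ] at hp
    rw [vertexSet_cons, card_union_eq_add_one_of_crossing hp.1 hp.2.1 hp.2.2, ih htail]

theorem essConnCount_succ :
    essConnCount N (n + 1) = essConnCount N n * ((n + 1) * (N - (n + 1))) := by
  classical
  simp only [essConnCount, Nat.card_eq_fintype_card, Fintype.card_subtype]
  have hsplit : #{θ : Fin (n + 1) → Finset (Fin N) | IsEssConnSeq θ} =
      #(({θ | IsEssConnSeq θ} : Finset (Fin n → Finset (Fin N))).sigma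
        fun θ => crossingPairs (vertexSet θ)) := by
    refine card_nbij' (fun θ => ⟨Fin.tail θ, θ 0⟩) (fun x => Fin.cons x.2 x.1) ?_ ?_ ?_ ?_
    · intro θ hθ
      rw [mem_coe, mem_filter_univ, ← Fin.cons_self_tail θ, isEssConnSeq_cons_iff] at hθ
      simpa using hθ
    · intro x hx
      simpa [isEssConnSeq_cons_iff] using hx
    · intro θ _
      exact Fin.cons_self_tail θ
    · intro x _
      simp
  rw [hsplit, card_sigma, sum_congr rfl fun θ hθ => ?_, sum_const, smul_eq_mul]
  rw [mem_filter_univ] at hθ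
  rw [card_crossingPairs, card_compl, Fintype.card_fin, hθ.card_vertexSet]

theorem essConnCount_eq_prod :
    essConnCount N n = ∏ k ∈ range n, (k + 1) * (N - (k + 1)) := by
  induction n with
  | zero => exact essConnCount_zero
  | succ m ih => rw [essConnCount_succ, ih, prod_range_succ]

end Sequences

theorem essConnCount_div_pow_eq_prod {N n : ℕ} (h : n < N) :
    ((N : ℝ) - 1)⁻¹ ^ n * essConnCount N n =
      ∏ k ∈ range n, ((k + 1 : ℝ) * ((N : ℝ) - (k + 1)) / ((N : ℝ) - 1)) := by
  have : NeZero N := ⟨by omega⟩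
  rw [essConnCount_eq_prod, prod_div_distrib, prod_const, card_range, div_eq_inv_mul, inv_pow,
    Nat.cast_prod]
  congr 1
  refine prod_congr rfl fun k hk => ?_
  rw [mem_range] at hk
  push_cast [Nat.cast_sub (show k + 1 ≤ N by omega)]
  rfl

theorem mul_sub_div_sub_one_le {a x : ℝ} (ha : 1 ≤ a) (hx : 1 < x) :
    a * (x - a) / (x - 1) ≤ a := by
  rw [div_le_iff₀ (sub_pos.2 hx)]
  nlinarith

theorem tendsto_mul_sub_div_sub_one (a : ℝ) :
    Tendsto (fun N : ℕ => a * (N - a) / (N - 1)) atTop (nhds a) := by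
  have h := tendsto_add_mul_div_add_mul_atTop_nhds (-(a * a)) (-1) a one_ne_zero
  rw [div_one] at h
  refine h.congr fun N => ?_
  ring

/-- `(N−1)^{−n} C_{n,ess}^{(N)} = ∏_{k=1}^{n} k (N−k)/(N−1)`, hence
`(N−1)^{−n} C_{n,ess}^{(N)} ≤ n!` for all `N > n`, and
`(N−1)^{−n} C_{n,ess}^{(N)} → n!` as `N → ∞`. -/
theorem essConnCount_asymptotics (n : ℕ) :
    (∀ N : ℕ, n < N →
      (((N : ℝ) - 1)⁻¹) ^ n * essConnCount N n =
        ∏ k ∈ Finset.range n, ((k + 1 : ℝ) * ((N : ℝ) - (k + 1)) / ((N : ℝ) - 1))) ∧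
    (∀ N : ℕ, n < N →
      (((N : ℝ) - 1)⁻¹) ^ n * essConnCount N n ≤ (Nat.factorial n : ℝ)) ∧
    Tendsto (fun N : ℕ => (((N : ℝ) - 1)⁻¹) ^ n * essConnCount N n) atTop
      (nhds (Nat.factorial n : ℝ)) := by
  have hfact : (n.factorial : ℝ) = ∏ k ∈ range n, ((k : ℝ) + 1) := by
    rw [Nat.factorial_eq_prod_range_add_one]
    push_cast
    rfl
  refine ⟨fun N => essConnCount_div_pow_eq_prod, fun N hN => ?_, ?_⟩
  · rw [essConnCount_div_pow_eq_prod hN, hfact]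
    refine prod_le_prod (fun k hk => ?_) (fun k hk => ?_)
    all_goals
      have hkN : (k : ℝ) + 1 < N := by
        rw [mem_range] at hk
        exact_mod_cast (show k + 1 < N by omega)
    · exact div_nonneg (by nlinarith) (by linarith)
    · exact mul_sub_div_sub_one_le (by linarith [Nat.cast_nonneg (α := ℝ) k]) (by linarith)
  · rw [hfact]
    refine (tendsto_finsetProd _ fun k _ => tendsto_mul_sub_div_sub_one _).congr' ?_
    filter_upwards [eventually_gt_atTop n] with N hN using (essConnCount_div_pow_eq_prod hN).symm
end
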